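/- Let b, c ≥ 0 be real numbers and A = [[c, 2b],[0, −c]]. Then the eigenvalues of A are c and −c, and these are the foci of the elliptical disk W(A) = { z ∈ ℂ : |z + c| + |z − c| ≤ 2√(b² + c²) } (for b > 0 or c > 0). -/

import Mathlib

set_option maxHeartbeats 1000000

open Matrix Polynomial

/-- The numerical range of a 2×2 complex matrix. -/
def numRange (A : Matrix (Fin 2) (Fin 2) ℂ) : Set ℂ :=
  { z | ∃ x : Fin 2 → ℂ, (∑ i, ‖x i‖ ^ 2) = 1 ∧ star x ⬝ᵥ A.mulVec x = z }

lemma conj_mul_self' (z : ℂ) : (starRingEnd ℂ) z * z = ((‖z‖ : ℂ))^2 := by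
  rw [mul_comm, Complex.mul_conj]; norm_cast; exact (Complex.sq_norm z).symm

lemma quadval (b c : ℝ) (x : Fin 2 → ℂ) :
    star x ⬝ᵥ (!![(c:ℂ), 2*b; 0, -c]).mulVec x
      = (c:ℂ) * ((‖x 0‖)^2 - (‖x 1‖)^2) + 2*b * (starRingEnd ℂ (x 0)) * x 1 := by
  simp [dotProduct, Matrix.mulVec, Fin.sum_univ_two]
  linear_combination (c:ℂ) * conj_mul_self' (x 0) - (c:ℂ) * conj_mul_self' (x 1)

lemma absC (z : ℂ) (t : ℝ) : ‖z + t‖ = Real.sqrt ((z.re + t)^2 + z.im^2) := by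
  rw [Complex.norm_def, Complex.normSq_apply]
  norm_num [Complex.add_re, Complex.add_im, Complex.ofReal_re, Complex.ofReal_im]
  ring_nf

lemma absC' (z : ℂ) (t : ℝ) : ‖z - t‖ = Real.sqrt ((z.re - t)^2 + z.im^2) := by
  have := absC z (-t)
  push_cast at this
  rw [sub_eq_add_neg, this]
  ring_nf

lemma forwardIneq (b c s u v : ℝ) (hb : 0 ≤ b) (hc : 0 ≤ c)
    (hs : s^2 ≤ 1) (huv : u^2 + v^2 = b^2*(1 - s^2)) :
    Real.sqrt ((c*s + u + c)^2 + v^2) + Real.sqrt ((c*s + u - c)^2 + v^2)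
      ≤ 2 * Real.sqrt (b^2 + c^2) := by
  have hM : 0 ≤ 2*(b^2+c^2) - ((c*s+u)^2 + v^2 + c^2) := by
    rcases eq_or_lt_of_le hb with hb0 | hb0
    · have hu : u = 0 := by
        have h2 : u^2 = 0 := by nlinarith [sq_nonneg v]
        exact pow_eq_zero_iff two_ne_zero |>.mp h2
      have hv : v = 0 := by
        have h2 : v^2 = 0 := by nlinarith [sq_nonneg u]
        exact pow_eq_zero_iff two_ne_zero |>.mp h2
      subst hu hv
      nlinarith [mul_nonneg (mul_nonneg hc hc) (by linarith : (0:ℝ) ≤ 1 - s^2)]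
    · nlinarith [sq_nonneg (b^2*s - c*u), sq_nonneg (c*v), mul_pos hb0 hb0]
  have hprod : ((c*s+u+c)^2 + v^2) * ((c*s+u-c)^2 + v^2)
      ≤ (2*(b^2+c^2) - ((c*s+u)^2 + v^2 + c^2))^2 := by
    nlinarith [sq_nonneg (c*u - b^2*s)]
  have h1 : Real.sqrt ((c*s+u+c)^2 + v^2) * Real.sqrt ((c*s+u-c)^2 + v^2)
      ≤ 2*(b^2+c^2) - ((c*s+u)^2 + v^2 + c^2) := by
    rw [← Real.sqrt_mul (by positivity)]
    calc Real.sqrt (((c*s+u+c)^2 + v^2) * ((c*s+u-c)^2 + v^2))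
        ≤ Real.sqrt ((2*(b^2+c^2) - ((c*s+u)^2 + v^2 + c^2))^2) := Real.sqrt_le_sqrt hprod
      _ = _ := Real.sqrt_sq hM
  have hsum : (Real.sqrt ((c*s+u+c)^2 + v^2) + Real.sqrt ((c*s+u-c)^2 + v^2))^2
      ≤ (2 * Real.sqrt (b^2+c^2))^2 := by
    have e1 : Real.sqrt ((c*s+u+c)^2 + v^2) ^ 2 = (c*s+u+c)^2 + v^2 := Real.sq_sqrt (by positivity)
    have e2 : Real.sqrt ((c*s+u-c)^2 + v^2) ^ 2 = (c*s+u-c)^2 + v^2 := Real.sq_sqrt (by positivity)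
    have e3 : Real.sqrt (b^2+c^2) ^ 2 = b^2+c^2 := Real.sq_sqrt (by positivity)
    nlinarith [h1]
  calc Real.sqrt ((c*s+u+c)^2 + v^2) + Real.sqrt ((c*s+u-c)^2 + v^2)
      = Real.sqrt ((Real.sqrt ((c*s+u+c)^2 + v^2) + Real.sqrt ((c*s+u-c)^2 + v^2))^2) :=
        (Real.sqrt_sq (by positivity)).symm
    _ ≤ Real.sqrt ((2 * Real.sqrt (b^2+c^2))^2) := Real.sqrt_le_sqrt hsum
    _ = 2 * Real.sqrt (b^2+c^2) := Real.sqrt_sq (by positivity)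

lemma reverseParam (b c X Y : ℝ) (hc : 0 ≤ c) (ha : 0 < b^2 + c^2)
    (h : Real.sqrt ((X+c)^2 + Y^2) + Real.sqrt ((X-c)^2 + Y^2) ≤ 2 * Real.sqrt (b^2 + c^2)) :
    ∃ s : ℝ, s^2 ≤ 1 ∧ (X - c*s)^2 + Y^2 = b^2*(1 - s^2) := by
  obtain ⟨r1, hr1n, hr1sq⟩ : ∃ r, 0 ≤ r ∧ r^2 = (X+c)^2 + Y^2 :=
    ⟨Real.sqrt ((X+c)^2 + Y^2), Real.sqrt_nonneg _, Real.sq_sqrt (by positivity)⟩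
  obtain ⟨r2, hr2n, hr2sq⟩ : ∃ r, 0 ≤ r ∧ r^2 = (X-c)^2 + Y^2 :=
    ⟨Real.sqrt ((X-c)^2 + Y^2), Real.sqrt_nonneg _, Real.sq_sqrt (by positivity)⟩
  obtain ⟨ra, hran, hrasq⟩ : ∃ r, 0 ≤ r ∧ r^2 = b^2 + c^2 :=
    ⟨Real.sqrt (b^2 + c^2), Real.sqrt_nonneg _, Real.sq_sqrt (by positivity)⟩
  have h' : r1 + r2 ≤ 2 * ra := by
    have e1 : r1 = Real.sqrt ((X+c)^2 + Y^2) := by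
      rw [← hr1sq] at *; exact (Real.sqrt_sq hr1n).symm
    have e2 : r2 = Real.sqrt ((X-c)^2 + Y^2) := by
      rw [← hr2sq] at *; exact (Real.sqrt_sq hr2n).symm
    have e3 : ra = Real.sqrt (b^2 + c^2) := by
      rw [← hrasq] at *; exact (Real.sqrt_sq hran).symm
    rw [e1, e2, e3]; exact h
  have hM : 0 ≤ 2*(b^2+c^2) - (X^2 + Y^2 + c^2) := by
    nlinarith [mul_nonneg hr1n hr2n, sq_nonneg (r1+r2)]
  have hrr : r1 * r2 ≤ 2*(b^2+c^2) - (X^2+Y^2+c^2) := by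
    nlinarith [sq_nonneg (r1+r2)]
  have hprodle : ((X+c)^2 + Y^2) * ((X-c)^2 + Y^2) ≤ (2*(b^2+c^2) - (X^2+Y^2+c^2))^2 := by
    have h5 : (r1*r2)^2 ≤ (2*(b^2+c^2) - (X^2+Y^2+c^2))^2 :=
      pow_le_pow_left₀ (mul_nonneg hr1n hr2n) hrr 2
    calc ((X+c)^2 + Y^2) * ((X-c)^2 + Y^2) = (r1*r2)^2 := by rw [mul_pow, hr1sq, hr2sq]
      _ ≤ _ := h5
  have hQ : b^2*X^2 + (b^2+c^2)*Y^2 ≤ (b^2+c^2)*b^2 := by nlinarith [hprodle]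
  have hD : 0 ≤ (b^2+c^2)*b^2 - (b^2*X^2 + (b^2+c^2)*Y^2) := by linarith
  obtain ⟨rd, hrdn, hrdsq⟩ : ∃ r, 0 ≤ r ∧ r^2 = (b^2+c^2)*b^2 - (b^2*X^2 + (b^2+c^2)*Y^2) :=
    ⟨Real.sqrt _, Real.sqrt_nonneg _, Real.sq_sqrt hD⟩
  set s : ℝ := (c*X + rd) / (b^2+c^2) with hsdef
  have hAs : (b^2+c^2) * s = c*X + rd := by
    rw [hsdef]; field_simp
  have hcX2 : c^2*X^2 ≤ (b^2+c^2)^2 := by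
    nlinarith [mul_nonneg (mul_nonneg hc hc) hM, sq_nonneg (c*Y), sq_nonneg (b*b), sq_nonneg (b*c)]
  have hcXle : c*X ≤ b^2+c^2 := by
    calc c*X ≤ |c*X| := le_abs_self _
      _ = Real.sqrt ((c*X)^2) := (Real.sqrt_sq_eq_abs _).symm
      _ ≤ Real.sqrt ((b^2+c^2)^2) := Real.sqrt_le_sqrt (by nlinarith [hcX2])
      _ = b^2+c^2 := Real.sqrt_sq ha.le
  have hcXge : -(b^2+c^2) ≤ c*X := by
    calc -(b^2+c^2) = -Real.sqrt ((b^2+c^2)^2) := by rw [Real.sqrt_sq ha.le]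
      _ ≤ -|c*X| := by
          simp only [neg_le_neg_iff]
          rw [← Real.sqrt_sq_eq_abs]
          exact Real.sqrt_le_sqrt (by nlinarith [hcX2])
      _ ≤ c*X := neg_abs_le _
  have hupper : rd ≤ (b^2+c^2) - c*X := by
    have h2 : rd^2 ≤ ((b^2+c^2) - c*X)^2 := by
      nlinarith [mul_nonneg ha.le (add_nonneg (sq_nonneg (X-c)) (sq_nonneg Y))]
    calc rd = Real.sqrt (rd^2) := (Real.sqrt_sq hrdn).symm
      _ ≤ Real.sqrt (((b^2+c^2) - c*X)^2) := Real.sqrt_le_sqrt h2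
      _ = (b^2+c^2) - c*X := Real.sqrt_sq (by linarith)
  refine ⟨s, ?_, ?_⟩
  · have hs1 : s ≤ 1 := by rw [hsdef, div_le_one ha]; linarith
    have hs2 : -1 ≤ s := by rw [hsdef, le_div_iff₀ ha]; nlinarith
    nlinarith [hs1, hs2]
  · have key : (b^2+c^2) * ((X - c*s)^2 + Y^2) = (b^2+c^2) * (b^2*(1-s^2)) := by
      linear_combination (rd + (b^2+c^2)*s - c*X) * hAs + hrdsq
    exact mul_left_cancel₀ (ne_of_gt ha) key

theorem stmt18 (b c : ℝ) (hb : 0 ≤ b) (hc : 0 ≤ c) :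
    (!![(c : ℂ), 2 * b; 0, -c]).charpoly = (X - C (c : ℂ)) * (X - C (-(c : ℂ))) ∧
    (0 < b ∨ 0 < c →
      numRange !![(c : ℂ), 2 * b; 0, -c] =
        { z : ℂ | ‖z + c‖ + ‖z - c‖ ≤ 2 * Real.sqrt (b ^ 2 + c ^ 2) }) := by
  constructor
  · rw [Matrix.charpoly, Matrix.det_fin_two]
    simp [Matrix.charmatrix_apply]
  · intro hbc
    have ha : 0 < b^2 + c^2 := by
      rcases hbc with h | h
      · positivity
      · positivity
    ext z
    simp only [Set.mem_setOf_eq]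
    constructor
    · rintro ⟨x, hx1, hx2⟩
      rw [Fin.sum_univ_two] at hx1
      set p := ‖x 0‖ with hp
      set q := ‖x 1‖ with hq
      set s := p^2 - q^2 with hsdef
      set w := 2*(b:ℂ) * (starRingEnd ℂ (x 0)) * (x 1) with hwdef
      have hz : z = ((c*s : ℝ) : ℂ) + w := by
        rw [← hx2, quadval, hsdef, hwdef]
        push_cast
        simp only [← hp, ← hq]
        try ring
      have hpn : 0 ≤ p := norm_nonneg _
      have hqn : 0 ≤ q := norm_nonneg _
      have hs : s^2 ≤ 1 := by nlinarith [sq_nonneg (p*q), sq_nonneg p, sq_nonneg q]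
      have habsw : ‖w‖ = 2*b*p*q := by
        rw [hwdef]
        simp only [norm_mul, Complex.norm_conj, Complex.norm_real, Real.norm_eq_abs, Complex.norm_two,
          abs_of_nonneg hb, ← hp, ← hq]
        try ring
      have huv : w.re^2 + w.im^2 = b^2*(1 - s^2) := by
        have h1 : w.re^2 + w.im^2 = (‖w‖)^2 := by
          rw [Complex.sq_norm, Complex.normSq_apply]; ring
        rw [h1, habsw, hsdef]
        linear_combination (b^2*(p^2+q^2+1))*hx1
      have hzre : z.re = c*s + w.re := by rw [hz]; simp
      have hzim : z.im = w.im := by rw [hz]; simp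
      rw [absC, absC', hzre, hzim]
      exact forwardIneq b c s w.re w.im hb hc hs huv
    · intro h
      rw [absC, absC'] at h
      obtain ⟨s, hs, heq⟩ := reverseParam b c z.re z.im hc ha h
      have hs1 : s ≤ 1 := by nlinarith [sq_nonneg (s-1)]
      have hs2 : -1 ≤ s := by nlinarith [sq_nonneg (s+1)]
      set p := Real.sqrt ((1+s)/2) with hpdef
      set q := Real.sqrt ((1-s)/2) with hqdef
      have hp2 : p^2 = (1+s)/2 := Real.sq_sqrt (by linarith)
      have hq2 : q^2 = (1-s)/2 := Real.sq_sqrt (by linarith)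
      have hpn : 0 ≤ p := Real.sqrt_nonneg _
      have hqn : 0 ≤ q := Real.sqrt_nonneg _
      set w : ℂ := z - ((c*s : ℝ) : ℂ) with hwdef
      have hwre : w.re = z.re - c*s := by rw [hwdef]; simp
      have hwim : w.im = z.im := by rw [hwdef]; simp
      have habsw2 : (‖w‖)^2 = b^2*(1-s^2) := by
        rw [Complex.sq_norm, Complex.normSq_apply, hwre, hwim]
        nlinarith [heq]
      have h2bpq : 2*b*p*q = ‖w‖ := by
        have h1 : (2*b*p*q)^2 = (‖w‖)^2 := by
          rw [habsw2, mul_pow, mul_pow, mul_pow, hp2, hq2]; ring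
        calc 2*b*p*q = Real.sqrt ((2*b*p*q)^2) := (Real.sqrt_sq (by positivity)).symm
          _ = Real.sqrt ((‖w‖)^2) := by rw [h1]
          _ = ‖w‖ := Real.sqrt_sq (norm_nonneg w)
      refine ⟨![(p:ℂ), if w = 0 then (q:ℂ) else (q:ℂ) * w / (‖w‖ : ℂ)], ?_, ?_⟩
      · rw [Fin.sum_univ_two]
        simp only [Matrix.cons_val_zero, Matrix.cons_val_one, Matrix.head_cons]
        have a0 : ‖(p:ℂ)‖ = p := by
          rw [Complex.norm_real, Real.norm_eq_abs, abs_of_nonneg hpn]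
        have a1 : ‖if w = 0 then (q:ℂ) else (q:ℂ) * w / (‖w‖ : ℂ)‖ = q := by
          by_cases hw0 : w = 0
          · rw [if_pos hw0, Complex.norm_real, Real.norm_eq_abs, abs_of_nonneg hqn]
          · rw [if_neg hw0, norm_div, norm_mul, Complex.norm_real, Real.norm_eq_abs, Complex.norm_real, Real.norm_eq_abs,
              abs_of_nonneg hqn, abs_of_nonneg (norm_nonneg w),
              mul_div_assoc, div_self (norm_ne_zero_iff.mpr hw0), mul_one]
        rw [a0, a1, hp2, hq2]; ring
      · rw [quadval]
        simp only [Matrix.cons_val_zero, Matrix.cons_val_one, Matrix.head_cons]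
        have a0 : ‖(p:ℂ)‖ = p := by
          rw [Complex.norm_real, Real.norm_eq_abs, abs_of_nonneg hpn]
        have a1 : ‖if w = 0 then (q:ℂ) else (q:ℂ) * w / (‖w‖ : ℂ)‖ = q := by
          by_cases hw0 : w = 0
          · rw [if_pos hw0, Complex.norm_real, Real.norm_eq_abs, abs_of_nonneg hqn]
          · rw [if_neg hw0, norm_div, norm_mul, Complex.norm_real, Real.norm_eq_abs, Complex.norm_real, Real.norm_eq_abs,
              abs_of_nonneg hqn, abs_of_nonneg (norm_nonneg w),
              mul_div_assoc, div_self (norm_ne_zero_iff.mpr hw0), mul_one]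
        rw [a0, a1, Complex.conj_ofReal]
        have hps : ((p:ℂ)^2 - (q:ℂ)^2) = (s : ℂ) := by
          have : p^2 - q^2 = s := by rw [hp2, hq2]; ring
          push_cast [← this]; ring
        rw [hps]
        have hzw : z = ((c*s : ℝ) : ℂ) + w := by rw [hwdef]; ring
        by_cases hw0 : w = 0
        · rw [if_pos hw0]
          have hq0 : (2*b*p*q : ℝ) = 0 := by rw [h2bpq, hw0, norm_zero]
          have : (2:ℂ)*(b:ℂ)*(p:ℂ)*(q:ℂ) = 0 := by
            have := congrArg (fun t : ℝ => (t : ℂ)) hq0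
            push_cast at this
            linear_combination this
          rw [hzw, hw0]
          push_cast
          linear_combination this
        · rw [if_neg hw0]
          have habsne : ((‖w‖ : ℝ) : ℂ) ≠ 0 := by
            simpa using norm_ne_zero_iff.mpr hw0
          have key : (2:ℂ)*(b:ℂ)*(p:ℂ)*(q:ℂ) = ((‖w‖ : ℝ) : ℂ) := by
            have := congrArg (fun t : ℝ => (t : ℂ)) h2bpq
            push_cast at this
            linear_combination this
          rw [hzw]
          field_simp
          push_cast
          linear_combination w * key
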